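/- Let g be the 6-dimensional real Lie algebra with basis e1,…,e6 given by the structure equations de^1 = e^{13}, de^2 = -e^{23}, de^4 = e^{56}, de^5 = -e^{46}, i.e. with nonzero brackets [e1,e3] = -e1, [e2,e3] = e2, [e5,e6] = -e4, [e4,e6] = e5 (the Lie algebra s_{3,1}^{-1} × s_{3,3}^0). Then the endomorphism J with J e1 = e2 + e4, J e2 = e1 + e5, J e3 = e6, extended by J^2 = -Id, is an integrable almost complex structure on g, i.e., J^2 = -Id and the Nijenhuis tensor N_J(x,y) = [x,y] + J[Jx,y] + J[x,Jy] - [Jx,Jy] vanishes for all x,y in g. -/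
import Mathlib


namespace Stmt1

abbrev V : Type := Fin 6 → ℝ

/-- standard basis -/
noncomputable def e (i : Fin 6) : V := Pi.single i 1

/-- the Lie bracket -/
def br (x y : V) : V := fun k =>
  match k with
  | 0 => -(x 0 * y 2 - x 2 * y 0)
  | 1 => x 1 * y 2 - x 2 * y 1
  | 2 => 0
  | 3 => -(x 4 * y 5 - x 5 * y 4)
  | 4 => x 3 * y 5 - x 5 * y 3
  | 5 => 0

/-- the adjoint operator `ad x = [x, ·]` as a linear endomorphism -/
noncomputable def ad (x : V) : V →ₗ[ℝ] V where
  toFun := br x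
  map_add' := by intro a b; funext k; fin_cases k <;> simp [br] <;> ring
  map_smul' := by intro c a; funext k; fin_cases k <;> simp [br] <;> ring

/-- the Nijenhuis tensor of an endomorphism `J` -/
noncomputable def nijenhuis (J : V →ₗ[ℝ] V) (x y : V) : V :=
  br x y + J (br (J x) y + br x (J y)) - br (J x) (J y)

/-- the Koszul 1-form `ψ(x) = Tr(J ∘ ad x) - Tr(ad (J x))` -/
noncomputable def psi (J : V →ₗ[ℝ] V) (x : V) : ℝ :=
  LinearMap.trace ℝ V (J ∘ₗ ad x) - LinearMap.trace ℝ V (ad (J x))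


noncomputable def Jmap : V →ₗ[ℝ] V where
  toFun := fun x k =>
    match k with
    | 0 => x 1 - 2 * x 3
    | 1 => x 0 - 2 * x 4
    | 2 => -x 5
    | 3 => x 0 - x 4
    | 4 => x 1 - x 3
    | 5 => x 2
  map_add' := by intro a b; funext k; fin_cases k <;> simp <;> ring
  map_smul' := by intro c a; funext k; fin_cases k <;> simp <;> ring

/-- on `s_{3,1}^{-1} × s_{3,3}^0` there exists an integrable almost complex
structure `J` with `J e1 = e2 + e4`, `J e2 = e1 + e5`, `J e3 = e6`. -/
theorem stmt_1 :
    ∃ J : V →ₗ[ℝ] V,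
      (∀ x : V, J (J x) = -x) ∧
      (∀ x y : V, nijenhuis J x y = 0) ∧
      J (e 0) = e 1 + e 3 ∧ J (e 1) = e 0 + e 4 ∧ J (e 2) = e 5 := by
  refine ⟨Jmap, ?_, ?_, ?_, ?_, ?_⟩
  · intro x; funext k; fin_cases k <;> simp [Jmap] <;> ring
  · intro x y; funext k
    show br x y k + Jmap (br (Jmap x) y + br x (Jmap y)) k - br (Jmap x) (Jmap y) k = 0
    fin_cases k <;> simp [Jmap, br] <;> ring
  · funext k; fin_cases k <;> simp [Jmap, e, Pi.single_apply]
  · funext k; fin_cases k <;> simp [Jmap, e, Pi.single_apply]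
  · funext k; fin_cases k <;> simp [Jmap, e, Pi.single_apply]

end Stmt1
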